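/- arXiv:2602.19116 — 2 statements merged into one kernel-verified Lean document; each statement's English description precedes it below -/
import Mathlib

section
/- Let matrices X_0, …, X_t, G_0, …, G_{t−1}, V_0, …, V_{t−1} ∈ ℝ^{d×n} satisfy X_{s+1} = X_s·W − η·G_s + V_s for s = 0,…,t−1, where W ∈ ℝ^{n×n} satisfies W𝟙 = 𝟙 and η ∈ ℝ. Define a_{k,i} := (1/n)𝟙 − Wᵏe_i ∈ ℝⁿ, x̄_t := X_t·(𝟙/n), and let x_{i,t} = X_t·e_i denote the i-th column of X_t. Then for every i, x̄_t − x_{i,t} = X_0·a_{t,i} − η·Σ_{j=0}^{t−1} G_j·a_{t−1−j,i} + Σ_{j=0}^{t−1} V_j·a_{t−1−j,i}. -/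
/-- The vector `a_{k,i} = (1/n)𝟙 − Wᵏ e_i ∈ ℝⁿ`. -/
noncomputable def aVec {n : ℕ} (W : Matrix (Fin n) (Fin n) ℝ) (k : ℕ) (i : Fin n) :
    Fin n → ℝ :=
  (fun _ => (n : ℝ)⁻¹) - (W ^ k).mulVec (Pi.single i 1)

lemma aVec_succ {n : ℕ} (W : Matrix (Fin n) (Fin n) ℝ)
    (hW1 : W.mulVec (fun _ => 1) = fun _ => 1) (k : ℕ) (i : Fin n) :
    W.mulVec (aVec W k i) = aVec W (k + 1) i := by
  unfold aVec
  rw [Matrix.mulVec_sub, Matrix.mulVec_mulVec, ← pow_succ']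
  congr 1
  have : (fun _ : Fin n => (n : ℝ)⁻¹) = (n : ℝ)⁻¹ • (fun _ : Fin n => (1 : ℝ)) := by
    funext x; simp
  rw [this, Matrix.mulVec_smul, hW1]

lemma key {n d : ℕ}
    (W : Matrix (Fin n) (Fin n) ℝ)
    (hW1 : W.mulVec (fun _ => 1) = fun _ => 1)
    (η : ℝ)
    (X G V : ℕ → Matrix (Fin d) (Fin n) ℝ)
    (i : Fin n) :
    ∀ t k, (∀ s, s < t → X (s + 1) = X s * W - η • G s + V s) →
    (X t).mulVec (aVec W k i) =
      (X 0).mulVec (aVec W (k + t) i)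
        - η • ∑ j ∈ Finset.range t, (G j).mulVec (aVec W (k + t - 1 - j) i)
        + ∑ j ∈ Finset.range t, (V j).mulVec (aVec W (k + t - 1 - j) i) := by
  intro t
  induction t with
  | zero => intro k _; simp
  | succ t ih =>
    intro k hrec
    rw [hrec t (Nat.lt_succ_self t)]
    rw [Matrix.add_mulVec, Matrix.sub_mulVec, ← Matrix.mulVec_mulVec,
      aVec_succ W hW1, Matrix.smul_mulVec]
    rw [ih (k + 1) (fun s hs => hrec s (Nat.lt_succ_of_lt hs))]
    rw [Finset.sum_range_succ, Finset.sum_range_succ]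
    have h1 : k + (t + 1) - 1 - t = k := by omega
    have h2 : k + 1 + t = k + (t + 1) := by omega
    rw [h1, h2]
    rw [smul_add]
    abel

/-- Under the recursion `X_{s+1} = X_s·W − η·G_s + V_s` (for `s = 0,…,t−1`) with
`W𝟙 = 𝟙`, the deviation of node `i` from the column average satisfies
`x̄_t − x_{i,t} = X_0·a_{t,i} − η·Σ_{j<t} G_j·a_{t−1−j,i} + Σ_{j<t} V_j·a_{t−1−j,i}`,
where `x̄_t = X_t·(𝟙/n)`, `x_{i,t} = X_t·e_i`, and `a_{k,i} = (1/n)𝟙 − Wᵏe_i`. -/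
theorem stmt_12
    (n d : ℕ) (hn : 1 ≤ n) (hd : 1 ≤ d)
    (t : ℕ) (ht : 1 ≤ t)
    (W : Matrix (Fin n) (Fin n) ℝ)
    (hW1 : W.mulVec (fun _ => 1) = fun _ => 1)
    (η : ℝ)
    (X G V : ℕ → Matrix (Fin d) (Fin n) ℝ)
    (hrec : ∀ s, s < t → X (s + 1) = X s * W - η • G s + V s)
    (i : Fin n) :
    (X t).mulVec (fun _ => (n : ℝ)⁻¹) - (X t).mulVec (Pi.single i 1) =
      (X 0).mulVec (aVec W t i)
        - η • ∑ j ∈ Finset.range t, (G j).mulVec (aVec W (t - 1 - j) i)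
        + ∑ j ∈ Finset.range t, (V j).mulVec (aVec W (t - 1 - j) i) := by
  have h0 : (X t).mulVec (fun _ => (n : ℝ)⁻¹) - (X t).mulVec (Pi.single i 1)
      = (X t).mulVec (aVec W 0 i) := by
    rw [← Matrix.mulVec_sub]
    congr 1
    unfold aVec
    rw [pow_zero, Matrix.one_mulVec]
  rw [h0, key W hW1 η X G V i t 0 hrec]
  simp
end

section
/- Let W ∈ ℝ^{n×n} be entrywise nonnegative, symmetric, and doubly stochastic (W𝟙 = 𝟙 and 𝟙ᵀW = 𝟙ᵀ), with δ = ‖W − J‖₂² < 1 where J = (1/n)𝟙𝟙ᵀ. Let t ≥ 1, let V_0,…,V_{t−1} ∈ ℝ^{d×n}, and set a_{k,i} := (1/n)𝟙 − Wᵏe_i. Then for every i ∈ {1,…,n}, ‖Σ_{j=0}^{t−1} V_j·a_{t−1−j,i}‖² ≤ Σ_{j=0}^{t−1} ‖V_j‖_F²·( δ^{t−1−j} + 2·(√δ)^{t−1−j}/(1 − √δ) ). -/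
/-- The matrix `J = (1/n) 𝟙 𝟙ᵀ`, all of whose entries equal `1/n`. -/
noncomputable def Jmat (n : ℕ) : Matrix (Fin n) (Fin n) ℝ :=
  Matrix.of fun _ _ => (n : ℝ)⁻¹

/-- The spectral norm of a real matrix: the operator norm of the associated linear map
between Euclidean spaces. -/
noncomputable def specNorm {m n : ℕ} (A : Matrix (Fin m) (Fin n) ℝ) : ℝ :=
  ‖(Matrix.toEuclideanLin A).toContinuousLinearMap‖

/-- View a vector in `ℝ^d` as an element of Euclidean space (with the Euclidean norm). -/
def toE {d : ℕ} (v : Fin d → ℝ) : EuclideanSpace ℝ (Fin d) := WithLp.toLp 2 v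

/-- The squared Frobenius norm of a matrix: the sum of the squares of its entries. -/
def frobSq {d n : ℕ} (M : Matrix (Fin d) (Fin n) ℝ) : ℝ :=
  ∑ i, ∑ k, (M k i) ^ 2

/-
Since `W𝟙 = 𝟙` and `𝟙ᵀW = 𝟙ᵀ`, the averaging matrix `J` is absorbed by `W` on both sides, which gives
`Wᵏ − J = (W − J)ᵏ (I − J)`. As `‖(I − J)eᵢ‖ ≤ 1`, this yields `‖a_{k,i}‖ ≤ √δᵏ`. Bounding each term
by `‖V_j‖_F ‖a_{t−1−j,i}‖` and applying Cauchy–Schwarz with the weights `√δ^{t−1−j}`, whose sum is at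
most `1/(1 − √δ)`, gives `‖Σ_j V_j a_{t−1−j,i}‖² ≤ Σ_j ‖V_j‖_F² √δ^{t−1−j}/(1 − √δ)`, which is
below the claimed bound.
-/

open Matrix Finset

lemma norm_toE_eq_sqrt_sum_sq {d : ℕ} (v : Fin d → ℝ) : ‖toE v‖ = √(∑ k, v k ^ 2) := by
  simp [EuclideanSpace.norm_eq, toE, Real.norm_eq_abs, sq_abs]

lemma norm_toE_mulVec_le {m n : ℕ} (A : Matrix (Fin m) (Fin n) ℝ) (x : Fin n → ℝ) :
    ‖toE (A *ᵥ x)‖ ≤ specNorm A * ‖toE x‖ :=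
  (toEuclideanLin A).toContinuousLinearMap.le_opNorm (toE x)

lemma norm_toE_pow_mulVec_le {n : ℕ} (M : Matrix (Fin n) (Fin n) ℝ) (k : ℕ) (x : Fin n → ℝ) :
    ‖toE ((M ^ k) *ᵥ x)‖ ≤ specNorm M ^ k * ‖toE x‖ := by
  induction k with
  | zero => simp
  | succ k ih =>
    rw [pow_succ', ← mulVec_mulVec, pow_succ', mul_assoc]
    exact (norm_toE_mulVec_le M _).trans
      (mul_le_mul_of_nonneg_left ih (norm_nonneg _))

lemma frobSq_nonneg {d n : ℕ} (M : Matrix (Fin d) (Fin n) ℝ) : 0 ≤ frobSq M :=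
  sum_nonneg fun _ _ => sum_nonneg fun _ _ => sq_nonneg _

lemma norm_toE_mulVec_le_sqrt_frobSq {d n : ℕ} (M : Matrix (Fin d) (Fin n) ℝ) (x : Fin n → ℝ) :
    ‖toE (M *ᵥ x)‖ ≤ √(frobSq M) * ‖toE x‖ := by
  rw [norm_toE_eq_sqrt_sum_sq, norm_toE_eq_sqrt_sum_sq, ← Real.sqrt_mul (frobSq_nonneg M)]
  apply Real.sqrt_le_sqrt
  calc ∑ k, (M *ᵥ x) k ^ 2
      ≤ ∑ k, (∑ l, M k l ^ 2) * ∑ l, x l ^ 2 :=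
        sum_le_sum fun k _ => sum_mul_sq_le_sq_mul_sq univ (M k) x
    _ = frobSq M * ∑ l, x l ^ 2 := by rw [← sum_mul, frobSq, sum_comm]

lemma norm_toE_sum_mulVec_le {ι : Type*} {d n : ℕ} (s : Finset ι)
    (M : ι → Matrix (Fin d) (Fin n) ℝ) (x : ι → Fin n → ℝ) :
    ‖toE (∑ j ∈ s, M j *ᵥ x j)‖ ≤ ∑ j ∈ s, √(frobSq (M j)) * ‖toE (x j)‖ := by
  rw [toE, WithLp.toLp_sum]
  exact (norm_sum_le _ _).trans (sum_le_sum fun j _ => norm_toE_mulVec_le_sqrt_frobSq _ _)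

section Jmat

variable {n : ℕ} {W : Matrix (Fin n) (Fin n) ℝ}

lemma mul_Jmat_of_mulVec_one (hW : W *ᵥ (fun _ => 1) = fun _ => 1) : W * Jmat n = Jmat n := by
  ext a b
  have hrow := congrFun hW a
  simp only [mulVec, dotProduct, mul_one] at hrow
  simp [mul_apply, Jmat, ← sum_mul, hrow]

lemma Jmat_mul_of_vecMul_one (hW : vecMul (fun _ => 1) W = fun _ => 1) :
    Jmat n * W = Jmat n := by
  ext a b
  have hcol := congrFun hW b
  simp only [vecMul, dotProduct, one_mul] at hcol
  simp [mul_apply, Jmat, ← mul_sum, hcol]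

lemma Jmat_mul_pow_of_vecMul_one (hW : vecMul (fun _ => 1) W = fun _ => 1) (k : ℕ) :
    Jmat n * W ^ k = Jmat n := by
  induction k with
  | zero => simp
  | succ k ih => rw [pow_succ, ← mul_assoc, ih, Jmat_mul_of_vecMul_one hW]

lemma Jmat_mul_Jmat : Jmat n * Jmat n = Jmat n := by
  ext a b
  have : (n : ℝ) ≠ 0 := Nat.cast_ne_zero.mpr a.pos.ne'
  simp only [mul_apply, Jmat, of_apply, sum_const, card_univ, Fintype.card_fin, nsmul_eq_mul]
  field_simp

lemma pow_sub_Jmat_eq (hW : W *ᵥ (fun _ => 1) = fun _ => 1)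
    (hW' : vecMul (fun _ => 1) W = fun _ => 1) (k : ℕ) :
    W ^ k - Jmat n = (W - Jmat n) ^ k * (1 - Jmat n) := by
  induction k with
  | zero => simp
  | succ k ih =>
    rw [pow_succ' (W - Jmat n), mul_assoc, ← ih, Matrix.sub_mul, Matrix.mul_sub,
      Matrix.mul_sub, mul_Jmat_of_mulVec_one hW, Jmat_mul_pow_of_vecMul_one hW',
      Jmat_mul_Jmat, pow_succ']
    abel

lemma aVec_eq_neg_mulVec (k : ℕ) (i : Fin n) :
    aVec W k i = -((W ^ k - Jmat n) *ᵥ Pi.single i 1) := by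
  ext l
  simp [aVec, Jmat]

lemma norm_toE_one_sub_Jmat_mulVec_single_le (i : Fin n) :
    ‖toE ((1 - Jmat n) *ᵥ Pi.single i 1)‖ ≤ 1 := by
  have hn : (n : ℝ) ≠ 0 := Nat.cast_ne_zero.mpr i.pos.ne'
  have hsq : ∑ l, ((1 - Jmat n) *ᵥ Pi.single i (1 : ℝ)) l ^ 2 = 1 - (n : ℝ)⁻¹ := by
    simp only [sub_mulVec, one_mulVec, Pi.sub_apply, sub_sq, sum_add_distrib, sum_sub_distrib]
    simp [Jmat, mulVec, dotProduct, Pi.single_apply]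
    field_simp
    ring
  rw [norm_toE_eq_sqrt_sum_sq, hsq, Real.sqrt_le_one]
  have : 0 ≤ (n : ℝ)⁻¹ := by positivity
  linarith

lemma norm_toE_aVec_le (hW : W *ᵥ (fun _ => 1) = fun _ => 1)
    (hW' : vecMul (fun _ => 1) W = fun _ => 1) (k : ℕ) (i : Fin n) :
    ‖toE (aVec W k i)‖ ≤ specNorm (W - Jmat n) ^ k := by
  rw [aVec_eq_neg_mulVec, pow_sub_Jmat_eq hW hW', ← mulVec_mulVec, toE, WithLp.toLp_neg,
    norm_neg]
  calc _ ≤ specNorm (W - Jmat n) ^ k * ‖toE ((1 - Jmat n) *ᵥ Pi.single i 1)‖ :=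
        norm_toE_pow_mulVec_le _ _ _
    _ ≤ specNorm (W - Jmat n) ^ k :=
        mul_le_of_le_one_right (pow_nonneg (norm_nonneg _) _)
          (norm_toE_one_sub_Jmat_mulVec_single_le i)

end Jmat

lemma sq_sum_mul_pow_le_div_one_sub {s : ℝ} (hs0 : 0 ≤ s) (hs1 : s < 1) (b : ℕ → ℝ) (t : ℕ) :
    (∑ j ∈ range t, b j * s ^ (t - 1 - j)) ^ 2
      ≤ (∑ j ∈ range t, b j ^ 2 * s ^ (t - 1 - j)) / (1 - s) := by
  have hweights : ∑ j ∈ range t, s ^ (t - 1 - j) ≤ 1 / (1 - s) := by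
    rw [sum_range_reflect (s ^ ·) t, ← Nat.Ico_zero_eq_range, ← pow_zero s]
    exact geom_sum_Ico_le_of_lt_one hs0 hs1
  calc _ ≤ (∑ j ∈ range t, b j ^ 2 * s ^ (t - 1 - j)) * ∑ j ∈ range t, s ^ (t - 1 - j) :=
        sum_sq_le_sum_mul_sum_of_sq_le_mul _
          (fun j _ => mul_nonneg (sq_nonneg _) (pow_nonneg hs0 _))
          (fun j _ => pow_nonneg hs0 _) (fun j _ => le_of_eq (by ring))
    _ ≤ _ := by
      rw [div_eq_mul_one_div]
      exact mul_le_mul_of_nonneg_left hweights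
        (sum_nonneg fun j _ => mul_nonneg (sq_nonneg _) (pow_nonneg hs0 _))

theorem stmt_16_general
    (n d : ℕ)
    (W : Matrix (Fin n) (Fin n) ℝ)
    (hW1 : W.mulVec (fun _ => 1) = fun _ => 1)
    (hW1' : Matrix.vecMul (fun _ => 1) W = fun _ => 1)
    (δ : ℝ) (hδdef : δ = (specNorm (W - Jmat n)) ^ 2) (hδ : δ < 1)
    (t : ℕ)
    (V : ℕ → Matrix (Fin d) (Fin n) ℝ)
    (i : Fin n) :
    ‖toE (∑ j ∈ Finset.range t, (V j).mulVec (aVec W (t - 1 - j) i))‖ ^ 2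
      ≤ ∑ j ∈ Finset.range t,
          frobSq (V j) *
            (δ ^ (t - 1 - j) + 2 * Real.sqrt δ ^ (t - 1 - j) / (1 - Real.sqrt δ)) := by
  set s := specNorm (W - Jmat n)
  have hs0 : 0 ≤ s := norm_nonneg _
  have hsδ : √δ = s := by rw [hδdef, Real.sqrt_sq hs0]
  have hs1 : s < 1 := lt_of_pow_lt_pow_left₀ 2 zero_le_one (by rwa [one_pow, ← hδdef])
  have hnorm : ‖toE (∑ j ∈ range t, V j *ᵥ aVec W (t - 1 - j) i)‖
      ≤ ∑ j ∈ range t, √(frobSq (V j)) * s ^ (t - 1 - j) :=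
    (norm_toE_sum_mulVec_le _ _ _).trans <| sum_le_sum fun j _ =>
      mul_le_mul_of_nonneg_left (norm_toE_aVec_le hW1 hW1' _ i) (Real.sqrt_nonneg _)
  calc _ ≤ (∑ j ∈ range t, √(frobSq (V j)) * s ^ (t - 1 - j)) ^ 2 :=
        pow_le_pow_left₀ (norm_nonneg _) hnorm 2
    _ ≤ (∑ j ∈ range t, √(frobSq (V j)) ^ 2 * s ^ (t - 1 - j)) / (1 - s) :=
        sq_sum_mul_pow_le_div_one_sub hs0 hs1 _ t
    _ ≤ _ := by
      rw [sum_div, hsδ]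
      refine sum_le_sum fun j _ => ?_
      rw [Real.sq_sqrt (frobSq_nonneg _), mul_div_assoc, mul_div_assoc 2]
      refine mul_le_mul_of_nonneg_left ?_ (frobSq_nonneg _)
      have : 0 ≤ s ^ (t - 1 - j) / (1 - s) := div_nonneg (pow_nonneg hs0 _) (by linarith)
      have : 0 ≤ δ ^ (t - 1 - j) := pow_nonneg (hδdef ▸ sq_nonneg s) _
      linarith

/-- For a nonnegative, symmetric, doubly stochastic mixing matrix `W` with
`δ = ‖W − J‖₂² < 1`, matrices `V_0,…,V_{t−1} ∈ ℝ^{d×n}`, and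
`a_{k,i} = (1/n)𝟙 − Wᵏe_i`, one has for every `i`:
`‖Σ_{j<t} V_j·a_{t−1−j,i}‖² ≤ Σ_{j<t} ‖V_j‖_F²·(δ^{t−1−j} + 2·(√δ)^{t−1−j}/(1 − √δ))`. -/
theorem stmt_16
    (n d : ℕ) (hn : 1 ≤ n) (hd : 1 ≤ d)
    (W : Matrix (Fin n) (Fin n) ℝ)
    (hWnn : ∀ i j, 0 ≤ W i j)
    (hWsymm : W.IsSymm)
    (hW1 : W.mulVec (fun _ => 1) = fun _ => 1)
    (hW1' : Matrix.vecMul (fun _ => 1) W = fun _ => 1)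
    (δ : ℝ) (hδdef : δ = (specNorm (W - Jmat n)) ^ 2) (hδ : δ < 1)
    (t : ℕ) (ht : 1 ≤ t)
    (V : ℕ → Matrix (Fin d) (Fin n) ℝ)
    (i : Fin n) :
    ‖toE (∑ j ∈ Finset.range t, (V j).mulVec (aVec W (t - 1 - j) i))‖ ^ 2
      ≤ ∑ j ∈ Finset.range t,
          frobSq (V j) *
            (δ ^ (t - 1 - j) + 2 * Real.sqrt δ ^ (t - 1 - j) / (1 - Real.sqrt δ)) :=
  stmt_16_general n d W hW1 hW1' δ hδdef hδ t V i
end
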